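/- arXiv:2404.08372 — 2 statements merged into one kernel-verified Lean document; each statement's English description precedes it below -/
import Mathlib

section
/- Fix g ∈ L^∞([0,1]) and τ > 0, and let W ∈ L^∞([0,1]²). Define the map K on the space M_g of continuous curves u : [0,τ] → L^∞([0,1]) with u(·,0) = g, equipped with the sup-in-time L^∞-in-space norm, by (Ku)(x,t) = g(x) + ∫₀^t ∫₀¹ |W(x,y)|(u(y,s) − u(x,s)) dy ds + 2∫₀^t ∫₀¹ W⁻(x,y) u(y,s) dy ds. Then for any u, v ∈ M_g, ‖Ku − Kv‖ ≤ 4‖W‖_∞ τ ‖u − v‖; in particular K is a contraction whenever τ < 1/(4‖W‖_∞). -/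
open MeasureTheory Set Filter

noncomputable section

/-- The unit interval as a subset of ℝ. -/
def I01 : Set ℝ := Set.Icc 0 1

/-- Lebesgue measure restricted to [0,1]. -/
def muI : MeasureTheory.Measure ℝ := MeasureTheory.volume.restrict I01

/-- The integral operator associated with a kernel `W`. -/
def Tk (W : ℝ → ℝ → ℝ) (f : ℝ → ℝ) : ℝ → ℝ :=
  fun x => ∫ y in I01, W x y * f y

/-- The L² norm on [0,1]. -/
def L2norm (f : ℝ → ℝ) : ℝ :=
  Real.sqrt (∫ x in I01, (f x) ^ 2)

/-- Membership in L²[0,1]. -/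
def MemL2 (f : ℝ → ℝ) : Prop := MeasureTheory.MemLp f 2 muI

/-- The L²→L² operator norm of the integral operator with kernel `W`. -/
def opNorm (W : ℝ → ℝ → ℝ) : ℝ :=
  sSup {c | ∃ f : ℝ → ℝ, MemL2 f ∧ L2norm f ≤ 1 ∧ c = L2norm (Tk W f)}

/-- Index of the interval `I_i = ((i-1)/n, i/n]` containing `x` (0-based). -/
def stepIdx (n : ℕ) (hn : 0 < n) (x : ℝ) : Fin n :=
  ⟨min (n - 1) (Nat.ceil ((n : ℝ) * x) - 1),
    lt_of_le_of_lt (min_le_left _ _) (Nat.sub_lt hn Nat.one_pos)⟩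

/-- The step-function graphon associated with an `n × n` matrix. -/
def stepKer {n : ℕ} (hn : 0 < n) (A : Fin n → Fin n → ℝ) : ℝ → ℝ → ℝ :=
  fun x y => A (stepIdx n hn x) (stepIdx n hn y)

/-- The step function on (0,1] associated with a vector. -/
def stepFun {n : ℕ} (hn : 0 < n) (v : Fin n → ℝ) : ℝ → ℝ :=
  fun x => v (stepIdx n hn x)

/-- The Picard map `K` for the opposing dynamics:
`(Ku)(x,t) = g(x) + ∫₀ᵗ∫₀¹ |W(x,y)|(u(y,s) − u(x,s)) dy ds
            + 2∫₀ᵗ∫₀¹ W⁻(x,y) u(y,s) dy ds`. -/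
def Kmap (W : ℝ → ℝ → ℝ) (g : ℝ → ℝ) (u : ℝ → ℝ → ℝ) : ℝ → ℝ → ℝ :=
  fun x t => g x + ∫ s in Set.Icc (0 : ℝ) t,
    ((∫ y in I01, |W x y| * (u y s - u x s)) +
     2 * ∫ y in I01, max (-(W x y)) 0 * u y s)


section AuxLemmas

lemma I01_meas : MeasurableSet I01 := measurableSet_Icc

lemma I01_vol : MeasureTheory.volume I01 = 1 := by simp [I01]

lemma bounded_intOn {f : ℝ → ℝ} {s : Set ℝ} (hμ : MeasureTheory.volume s ≠ ⊤)
    (hs : MeasurableSet s) (hm : Measurable f) {M : ℝ} (hb : ∀ y ∈ s, |f y| ≤ M) :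
    MeasureTheory.IntegrableOn f s := by
  refine MeasureTheory.Measure.integrableOn_of_bounded (M := M) hμ hm.aestronglyMeasurable ?_
  exact (MeasureTheory.ae_restrict_iff' hs).2
    (MeasureTheory.ae_of_all _ fun y hy => by simpa using hb y hy)

end AuxLemmas

/-- `‖Ku − Kv‖ ≤ 4‖W‖_∞ τ ‖u − v‖` on `M_g`; in particular `K`
is a contraction whenever `τ < 1/(4‖W‖_∞)`. -/
theorem Kmap_contraction (W : ℝ → ℝ → ℝ) (g : ℝ → ℝ) (u v : ℝ → ℝ → ℝ)
    (τ C B Mu Mv : ℝ) (hτ : 0 ≤ τ)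
    (hWm : Measurable (Function.uncurry W)) (hC : ∀ x y, |W x y| ≤ C)
    (hum : Measurable fun p : ℝ × ℝ => u p.1 p.2)
    (hvm : Measurable fun p : ℝ × ℝ => v p.1 p.2)
    (hu0 : ∀ x ∈ I01, u x 0 = g x) (hv0 : ∀ x ∈ I01, v x 0 = g x)
    (huc : ∀ x ∈ I01, ContinuousOn (u x) (Set.Icc 0 τ))
    (hvc : ∀ x ∈ I01, ContinuousOn (v x) (Set.Icc 0 τ))
    (huB : ∀ x ∈ I01, ∀ t ∈ Set.Icc (0 : ℝ) τ, |u x t| ≤ Mu)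
    (hvB : ∀ x ∈ I01, ∀ t ∈ Set.Icc (0 : ℝ) τ, |v x t| ≤ Mv)
    (hB : ∀ x ∈ I01, ∀ t ∈ Set.Icc (0 : ℝ) τ, |u x t - v x t| ≤ B) :
    (∀ t ∈ Set.Icc (0 : ℝ) τ, ∀ x ∈ I01,
      |Kmap W g u x t - Kmap W g v x t| ≤ 4 * C * τ * B) ∧
    (4 * C * τ < 1 → ∀ t ∈ Set.Icc (0 : ℝ) τ, ∀ x ∈ I01,
      |Kmap W g u x t - Kmap W g v x t| ≤ (4 * C * τ) * B) := by
  have h0I : (0:ℝ) ∈ I01 := by constructor <;> norm_num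
  have hC0 : 0 ≤ C := le_trans (abs_nonneg _) (hC 0 0)
  have h0τ : (0:ℝ) ∈ Set.Icc (0:ℝ) τ := ⟨le_refl 0, hτ⟩
  have hB0 : 0 ≤ B := le_trans (abs_nonneg _) (hB 0 h0I 0 h0τ)
  have hMu0 : 0 ≤ Mu := le_trans (abs_nonneg _) (huB 0 h0I 0 h0τ)
  have hMv0 : 0 ≤ Mv := le_trans (abs_nonneg _) (hvB 0 h0I 0 h0τ)
  have hvolI : volume I01 ≠ ⊤ := by rw [I01_vol]; exact ENNReal.one_ne_top
  have hvolIr : (volume I01).toReal = 1 := by rw [I01_vol]; simp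
  have main : ∀ t ∈ Set.Icc (0:ℝ) τ, ∀ x ∈ I01,
      |Kmap W g u x t - Kmap W g v x t| ≤ 4 * C * τ * B := by
    intro t ht x hx
    have hsub : Set.Icc (0:ℝ) t ⊆ Set.Icc 0 τ := Set.Icc_subset_Icc_right ht.2
    have hvolt : volume (Set.Icc (0:ℝ) t) ≠ ⊤ := (measure_Icc_lt_top).ne
    have hWx : Measurable fun y => W x y :=
      hWm.comp (measurable_const.prodMk measurable_id)
    -- generic facts for a curve w with bound Mw
    have key : ∀ (w : ℝ → ℝ → ℝ) (Mw : ℝ), Measurable (fun p : ℝ × ℝ => w p.1 p.2) →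
        (∀ z ∈ I01, ∀ r ∈ Set.Icc (0:ℝ) τ, |w z r| ≤ Mw) →
        Measurable (fun p : ℝ × ℝ => |W x p.2| * (w p.2 p.1 - w x p.1)
            + 2 * (max (-(W x p.2)) 0 * w p.2 p.1)) ∧
        (∀ s ∈ Set.Icc (0:ℝ) τ,
          IntegrableOn (fun y => |W x y| * (w y s - w x s)) I01 volume ∧
          IntegrableOn (fun y => 2 * (max (-(W x y)) 0 * w y s)) I01 volume) ∧
        (∀ s ∈ Set.Icc (0:ℝ) τ,
          (∫ y in I01, |W x y| * (w y s - w x s)) + 2 * ∫ y in I01, max (-(W x y)) 0 * w y s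
            = ∫ y in I01, (|W x y| * (w y s - w x s) + 2 * (max (-(W x y)) 0 * w y s))) := by
      intro w Mw hwm hwB
      have hw1 : Measurable fun p : ℝ × ℝ => w p.2 p.1 :=
        hwm.comp (measurable_snd.prodMk measurable_fst)
      have hw2 : Measurable fun p : ℝ × ℝ => w x p.1 :=
        hwm.comp (measurable_const.prodMk measurable_fst)
      have hWp : Measurable fun p : ℝ × ℝ => W x p.2 := hWx.comp measurable_snd
      have hHm : Measurable (fun p : ℝ × ℝ => |W x p.2| * (w p.2 p.1 - w x p.1)
            + 2 * (max (-(W x p.2)) 0 * w p.2 p.1)) :=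
        (hWp.abs.mul (hw1.sub hw2)).add
          (measurable_const.mul ((hWp.neg.max measurable_const).mul hw1))
      have hint : ∀ s ∈ Set.Icc (0:ℝ) τ,
          IntegrableOn (fun y => |W x y| * (w y s - w x s)) I01 volume ∧
          IntegrableOn (fun y => 2 * (max (-(W x y)) 0 * w y s)) I01 volume := by
        intro s hs
        have hws : Measurable fun y => w y s :=
          hwm.comp (measurable_id.prodMk measurable_const)
        constructor
        · refine bounded_intOn hvolI I01_meas (hWx.abs.mul (hws.sub measurable_const))
            (M := C * (Mw + Mw)) ?_
          intro y hy
          rw [abs_mul, abs_abs]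
          have h1 := hwB y hy s hs
          have h2 := hwB x hx s hs
          have h3 : |w y s - w x s| ≤ Mw + Mw := (abs_sub _ _).trans (by linarith)
          exact mul_le_mul (hC x y) h3 (abs_nonneg _) hC0
        · refine bounded_intOn hvolI I01_meas
            (measurable_const.mul ((hWx.neg.max measurable_const).mul hws))
            (M := 2 * (C * Mw)) ?_
          intro y hy
          have hmax0 : 0 ≤ max (-(W x y)) 0 := le_max_right _ _
          have hmaxC : max (-(W x y)) 0 ≤ C :=
            max_le (le_trans (neg_le_abs _) (hC x y)) hC0
          have h1 := hwB y hy s hs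
          rw [abs_mul, abs_mul, abs_of_nonneg hmax0]
          have : max (-(W x y)) 0 * |w y s| ≤ C * Mw :=
            mul_le_mul hmaxC h1 (abs_nonneg _) hC0
          calc |(2:ℝ)| * (max (-(W x y)) 0 * |w y s|) = 2 * (max (-(W x y)) 0 * |w y s|) := by
                norm_num
            _ ≤ 2 * (C * Mw) := by linarith
      refine ⟨hHm, hint, ?_⟩
      intro s hs
      obtain ⟨hA, hB2⟩ := hint s hs
      rw [← MeasureTheory.integral_const_mul]
      exact (MeasureTheory.integral_add hA hB2).symm
    obtain ⟨hHmu, hIu, hEqu⟩ := key u Mu hum huB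
    obtain ⟨hHmv, hIv, hEqv⟩ := key v Mv hvm hvB
    set Gu : ℝ → ℝ := fun s => ∫ y in I01,
      (|W x y| * (u y s - u x s) + 2 * (max (-(W x y)) 0 * u y s)) with hGudef
    set Gv : ℝ → ℝ := fun s => ∫ y in I01,
      (|W x y| * (v y s - v x s) + 2 * (max (-(W x y)) 0 * v y s)) with hGvdef
    have hK : Kmap W g u x t - Kmap W g v x t
        = (∫ s in Set.Icc (0:ℝ) t, Gu s) - ∫ s in Set.Icc (0:ℝ) t, Gv s := by
      have e1 : ∫ s in Set.Icc (0:ℝ) t, ((∫ y in I01, |W x y| * (u y s - u x s))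
            + 2 * ∫ y in I01, max (-(W x y)) 0 * u y s) = ∫ s in Set.Icc (0:ℝ) t, Gu s :=
        MeasureTheory.setIntegral_congr_fun measurableSet_Icc (fun s hs => hEqu s (hsub hs))
      have e2 : ∫ s in Set.Icc (0:ℝ) t, ((∫ y in I01, |W x y| * (v y s - v x s))
            + 2 * ∫ y in I01, max (-(W x y)) 0 * v y s) = ∫ s in Set.Icc (0:ℝ) t, Gv s :=
        MeasureTheory.setIntegral_congr_fun measurableSet_Icc (fun s hs => hEqv s (hsub hs))
      simp only [Kmap]
      rw [e1, e2]
      ring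
    -- integrability of Gu, Gv on Icc 0 t
    have intG : ∀ (H : ℝ × ℝ → ℝ) (MH : ℝ), Measurable H →
        (∀ s ∈ Set.Icc (0:ℝ) t, |∫ y in I01, H (s, y)| ≤ MH) →
        IntegrableOn (fun s => ∫ y in I01, H (s, y)) (Set.Icc (0:ℝ) t) volume := by
      intro H MH hHm hbd
      have hsm : StronglyMeasurable fun s => ∫ y in I01, H (s, y) :=
        hHm.stronglyMeasurable.integral_prod_right'
      exact bounded_intOn hvolt measurableSet_Icc hsm.measurable hbd
    have bndG : ∀ (w : ℝ → ℝ → ℝ) (Mw : ℝ),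
        (∀ s ∈ Set.Icc (0:ℝ) τ,
          IntegrableOn (fun y => |W x y| * (w y s - w x s)) I01 volume ∧
          IntegrableOn (fun y => 2 * (max (-(W x y)) 0 * w y s)) I01 volume) →
        (∀ z ∈ I01, ∀ r ∈ Set.Icc (0:ℝ) τ, |w z r| ≤ Mw) →
        ∀ s ∈ Set.Icc (0:ℝ) t,
          |∫ y in I01, (|W x y| * (w y s - w x s) + 2 * (max (-(W x y)) 0 * w y s))|
            ≤ C * (Mw + Mw) + 2 * (C * Mw) := by
      intro w Mw hint hwB s hs
      have hsτ := hsub hs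
      have hInt := hint s hsτ
      have := MeasureTheory.norm_setIntegral_le_of_norm_le_const
        (f := fun y => |W x y| * (w y s - w x s) + 2 * (max (-(W x y)) 0 * w y s))
        (C := C * (Mw + Mw) + 2 * (C * Mw)) (μ := volume) (s := I01)
        (hvolI.lt_top) ?_
      · rw [Real.norm_eq_abs] at this
        calc |∫ y in I01, (|W x y| * (w y s - w x s) + 2 * (max (-(W x y)) 0 * w y s))|
            ≤ (C * (Mw + Mw) + 2 * (C * Mw)) * (volume I01).toReal := this
          _ = C * (Mw + Mw) + 2 * (C * Mw) := by rw [hvolIr]; ring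
      · intro y hy
        rw [Real.norm_eq_abs]
        have hmax0 : 0 ≤ max (-(W x y)) 0 := le_max_right _ _
        have hmaxC : max (-(W x y)) 0 ≤ C :=
          max_le (le_trans (neg_le_abs _) (hC x y)) hC0
        have h1 := hwB y hy s hsτ
        have h2 := hwB x hx s hsτ
        have h3 : |w y s - w x s| ≤ Mw + Mw := (abs_sub _ _).trans (by linarith)
        calc |(|W x y| * (w y s - w x s) + 2 * (max (-(W x y)) 0 * w y s))|
            ≤ |(|W x y| * (w y s - w x s))| + |2 * (max (-(W x y)) 0 * w y s)| := abs_add_le _ _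
          _ = |W x y| * |w y s - w x s| + 2 * (max (-(W x y)) 0 * |w y s|) := by
              rw [abs_mul, abs_abs, abs_mul, abs_mul, abs_of_nonneg hmax0]; norm_num
          _ ≤ C * (Mw + Mw) + 2 * (C * Mw) := by
              have e1 : |W x y| * |w y s - w x s| ≤ C * (Mw + Mw) :=
                mul_le_mul (hC x y) h3 (abs_nonneg _) hC0
              have e2 : max (-(W x y)) 0 * |w y s| ≤ C * Mw :=
                mul_le_mul hmaxC h1 (abs_nonneg _) hC0
              linarith
    have hGu : IntegrableOn Gu (Set.Icc (0:ℝ) t) volume :=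
      intG (fun p => |W x p.2| * (u p.2 p.1 - u x p.1) + 2 * (max (-(W x p.2)) 0 * u p.2 p.1))
        (C * (Mu + Mu) + 2 * (C * Mu)) hHmu (bndG u Mu hIu huB)
    have hGv : IntegrableOn Gv (Set.Icc (0:ℝ) t) volume :=
      intG (fun p => |W x p.2| * (v p.2 p.1 - v x p.1) + 2 * (max (-(W x p.2)) 0 * v p.2 p.1))
        (C * (Mv + Mv) + 2 * (C * Mv)) hHmv (bndG v Mv hIv hvB)
    -- pointwise bound on Gu - Gv
    have hptG : ∀ s ∈ Set.Icc (0:ℝ) t, |Gu s - Gv s| ≤ 4 * C * B := by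
      intro s hs
      have hsτ := hsub hs
      have hIu' := hIu s hsτ
      have hIv' := hIv s hsτ
      have hdiff : Gu s - Gv s = ∫ y in I01,
          ((|W x y| * (u y s - u x s) + 2 * (max (-(W x y)) 0 * u y s))
            - (|W x y| * (v y s - v x s) + 2 * (max (-(W x y)) 0 * v y s))) := by
        rw [hGudef, hGvdef]
        exact (MeasureTheory.integral_sub (hIu'.1.add hIu'.2) (hIv'.1.add hIv'.2)).symm
      rw [hdiff]
      have hb := MeasureTheory.norm_setIntegral_le_of_norm_le_const
        (f := fun y => (|W x y| * (u y s - u x s) + 2 * (max (-(W x y)) 0 * u y s))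
            - (|W x y| * (v y s - v x s) + 2 * (max (-(W x y)) 0 * v y s)))
        (C := 4 * C * B) (μ := volume) (s := I01) (hvolI.lt_top) ?_
      · rw [Real.norm_eq_abs] at hb
        calc _ ≤ (4 * C * B) * (volume I01).toReal := hb
          _ = 4 * C * B := by rw [hvolIr]; ring
      · intro y hy
        rw [Real.norm_eq_abs]
        have hmax0 : 0 ≤ max (-(W x y)) 0 := le_max_right _ _
        have hmaxC : max (-(W x y)) 0 ≤ C :=
          max_le (le_trans (neg_le_abs _) (hC x y)) hC0
        have h1 := hB y hy s hsτ
        have h2 := hB x hx s hsτ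
        have hd : |(u y s - v y s) - (u x s - v x s)| ≤ B + B :=
          (abs_sub _ _).trans (by linarith)
        have e : (|W x y| * (u y s - u x s) + 2 * (max (-(W x y)) 0 * u y s))
            - (|W x y| * (v y s - v x s) + 2 * (max (-(W x y)) 0 * v y s))
            = |W x y| * ((u y s - v y s) - (u x s - v x s))
              + 2 * (max (-(W x y)) 0 * (u y s - v y s)) := by ring
        calc |(|W x y| * (u y s - u x s) + 2 * (max (-(W x y)) 0 * u y s))
            - (|W x y| * (v y s - v x s) + 2 * (max (-(W x y)) 0 * v y s))|
            = |(|W x y| * ((u y s - v y s) - (u x s - v x s))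
              + 2 * (max (-(W x y)) 0 * (u y s - v y s)))| := by rw [e]
          _ ≤ |(|W x y| * ((u y s - v y s) - (u x s - v x s)))|
              + |2 * (max (-(W x y)) 0 * (u y s - v y s))| := abs_add_le _ _
          _ = |W x y| * |(u y s - v y s) - (u x s - v x s)|
              + 2 * (max (-(W x y)) 0 * |u y s - v y s|) := by
              rw [abs_mul, abs_abs, abs_mul, abs_mul, abs_of_nonneg hmax0]; norm_num
          _ ≤ C * (B + B) + 2 * (C * B) := by
              have e1 : |W x y| * |(u y s - v y s) - (u x s - v x s)| ≤ C * (B + B) :=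
                mul_le_mul (hC x y) hd (abs_nonneg _) hC0
              have e2 : max (-(W x y)) 0 * |u y s - v y s| ≤ C * B :=
                mul_le_mul hmaxC h1 (abs_nonneg _) hC0
              linarith
          _ = 4 * C * B := by ring
    -- final estimate
    have hfin := MeasureTheory.norm_setIntegral_le_of_norm_le_const
      (f := fun s => Gu s - Gv s) (C := 4 * C * B) (μ := volume) (s := Set.Icc (0:ℝ) t)
      (measure_Icc_lt_top) (fun s hs => by rw [Real.norm_eq_abs]; exact hptG s hs)
    rw [Real.norm_eq_abs] at hfin
    calc |Kmap W g u x t - Kmap W g v x t|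
        = |∫ s in Set.Icc (0:ℝ) t, (Gu s - Gv s)| := by
          rw [hK, ← MeasureTheory.integral_sub hGu hGv]
      _ ≤ (4 * C * B) * (volume (Set.Icc (0:ℝ) t)).toReal := hfin
      _ = 4 * C * B * t := by
          rw [Real.volume_Icc, ENNReal.toReal_ofReal (by linarith [ht.1])]
          ring
      _ ≤ 4 * C * τ * B := by nlinarith [ht.2, mul_nonneg hC0 hB0]
  exact ⟨main, fun _ => main⟩
end
end

section
/- Let W : [0,1]² → [-1,1] be symmetric measurable, g ∈ L^∞[0,1], and let W_n, g_n be the step-function graphon and initial condition of a signed graph of size n. Let u and u_n be classical solutions of the opposing graphon dynamics with data (W,g) and (W_n,g_n). Then for all t ∈ [0,T], ‖u(·,t) − u_n(·,t)‖₂ ≤ (‖g − g_n‖₂ + C_u(‖T_{W⁺} − T_{W_n⁺}‖_op + ‖T_{W⁻} − T_{W_n⁻}‖_op))·e^{4T}, where W⁺ = max(W,0), W⁻ = max(−W,0), and C_u = ess sup |u| over [0,1] × [0,T]. -/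
open MeasureTheory Set Filter
open Topology

noncomputable section

/-- `u` is a classical solution of the repelling graphon dynamics
`∂u/∂t(x,t) = ∫₀¹ W(x,y)(u(y,t) - u(x,t)) dy`, `u(·,0) = g`, as a C¹ curve
in L^∞([0,1]) (measurable in space, locally bounded, pointwise ODE). -/
def IsRepellingSol (W : ℝ → ℝ → ℝ) (g : ℝ → ℝ) (u : ℝ → ℝ → ℝ) : Prop :=
  (∀ x ∈ I01, u x 0 = g x) ∧
  (∀ t : ℝ, 0 ≤ t → Measurable (fun x => u x t)) ∧
  (∀ T : ℝ, 0 < T → ∃ M : ℝ, ∀ x ∈ I01, ∀ t ∈ Set.Icc (0 : ℝ) T, |u x t| ≤ M) ∧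
  (∀ x ∈ I01, ∀ t : ℝ, 0 ≤ t →
    HasDerivAt (u x) (∫ y in I01, W x y * (u y t - u x t)) t)

/-- `u` is a classical solution of the opposing (Altafini) graphon dynamics
`∂u/∂t(x,t) = ∫₀¹ W(x,y)u(y,t) dy − (∫₀¹ |W(x,y)| dy) u(x,t)`, `u(·,0) = g`. -/
def IsOpposingSol (W : ℝ → ℝ → ℝ) (g : ℝ → ℝ) (u : ℝ → ℝ → ℝ) : Prop :=
  (∀ x ∈ I01, u x 0 = g x) ∧
  (∀ t : ℝ, 0 ≤ t → Measurable (fun x => u x t)) ∧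
  (∀ T : ℝ, 0 < T → ∃ M : ℝ, ∀ x ∈ I01, ∀ t ∈ Set.Icc (0 : ℝ) T, |u x t| ≤ M) ∧
  (∀ x ∈ I01, ∀ t : ℝ, 0 ≤ t →
    HasDerivAt (u x)
      ((∫ y in I01, W x y * u y t) - (∫ y in I01, |W x y|) * u x t) t)

/-- The essential supremum of `|u(x,t)|` over `(x,t) ∈ [0,1] × [0,T]`. -/
def CuT (u : ℝ → ℝ → ℝ) (T : ℝ) : ℝ :=
  (MeasureTheory.eLpNorm (fun p : ℝ × ℝ => u p.1 p.2) ⊤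
    (muI.prod (MeasureTheory.volume.restrict (Set.Icc (0 : ℝ) T)))).toReal

lemma muI_univ : muI Set.univ = 1 := by
  simp [muI, I01, Measure.restrict_apply, Real.volume_Icc]

instance : IsProbabilityMeasure muI := ⟨muI_univ⟩

lemma integral_I01 (f : ℝ → ℝ) : (∫ x in I01, f x) = ∫ x, f x ∂muI := rfl

lemma memL2_of_bound {f : ℝ → ℝ} (hm : AEStronglyMeasurable f muI) {C : ℝ}
    (h : ∀ᵐ x ∂muI, |f x| ≤ C) : MemLp f 2 muI :=
  MemLp.of_bound hm C h

lemma L2norm_nonneg (f : ℝ → ℝ) : 0 ≤ L2norm f := Real.sqrt_nonneg _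

lemma L2norm_eq_norm_toLp {f : ℝ → ℝ} (hf : MemLp f 2 muI) :
    L2norm f = ‖hf.toLp f‖ := by
  have h2 : (‖hf.toLp f‖ : ℝ) ^ 2 = ∫ x, f x ^ 2 ∂muI := by
    rw [← real_inner_self_eq_norm_sq]
    rw [MeasureTheory.L2.inner_def]
    refine integral_congr_ae ?_
    filter_upwards [hf.coeFn_toLp] with x hx
    simp [hx, sq]
  rw [L2norm, integral_I01, ← h2]
  exact Real.sqrt_sq (norm_nonneg _)

lemma L2norm_congr {f g : ℝ → ℝ} (h : f =ᵐ[muI] g) : L2norm f = L2norm g := by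
  unfold L2norm
  rw [integral_I01, integral_I01]
  congr 1
  exact integral_congr_ae (h.mono fun x hx => by simp only [hx])

lemma L2norm_add_le {f g : ℝ → ℝ} (hf : MemLp f 2 muI) (hg : MemLp g 2 muI) :
    L2norm (fun x => f x + g x) ≤ L2norm f + L2norm g := by
  have hfg : MemLp (fun x => f x + g x) 2 muI := hf.add hg
  rw [L2norm_eq_norm_toLp hf, L2norm_eq_norm_toLp hg, L2norm_eq_norm_toLp hfg]
  have : hfg.toLp _ = hf.toLp f + hg.toLp g := by
    apply Lp.ext
    filter_upwards [hfg.coeFn_toLp, (hf.add hg).coeFn_toLp, Lp.coeFn_add (hf.toLp f) (hg.toLp g),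
      hf.coeFn_toLp, hg.coeFn_toLp] with x h1 h2 h3 h4 h5
    rw [h1, h3, Pi.add_apply, h4, h5]
  rw [this]
  exact norm_add_le _ _

lemma integral_mul_le_L2 {f g : ℝ → ℝ} (hf : MemLp f 2 muI) (hg : MemLp g 2 muI) :
    |∫ x in I01, f x * g x| ≤ L2norm f * L2norm g := by
  rw [integral_I01, L2norm_eq_norm_toLp hf, L2norm_eq_norm_toLp hg]
  have : (∫ x, f x * g x ∂muI) = (inner ℝ (hf.toLp f) (hg.toLp g) : ℝ) := by
    rw [MeasureTheory.L2.inner_def]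
    refine integral_congr_ae ?_
    filter_upwards [hf.coeFn_toLp, hg.coeFn_toLp] with x h1 h2
    simp [h1, h2, mul_comm]
  rw [this]
  exact abs_real_inner_le_norm _ _

lemma L2norm_le_of_bound {f : ℝ → ℝ} (hf : AEStronglyMeasurable f muI) {C : ℝ} (hC : 0 ≤ C)
    (h : ∀ᵐ x ∂muI, |f x| ≤ C) : L2norm f ≤ C := by
  have hint : (∫ x, f x ^ 2 ∂muI) ≤ C ^ 2 := by
    have : (∫ x, f x ^ 2 ∂muI) ≤ ∫ _x, C ^ 2 ∂muI := by
      apply integral_mono_ae ((memL2_of_bound hf h).integrable_sq) (integrable_const _)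
      filter_upwards [h] with x hx
      calc f x ^ 2 = |f x| ^ 2 := (sq_abs _).symm
        _ ≤ C ^ 2 := by gcongr
    simpa [muI_univ] using this
  rw [L2norm, integral_I01]
  calc Real.sqrt (∫ x, f x ^ 2 ∂muI) ≤ Real.sqrt (C ^ 2) := Real.sqrt_le_sqrt hint
    _ = C := Real.sqrt_sq hC

lemma L2norm_const_mul (c : ℝ) (hc : 0 ≤ c) (f : ℝ → ℝ) :
    L2norm (fun x => c * f x) = c * L2norm f := by
  unfold L2norm
  rw [integral_I01, integral_I01]
  have : (∫ x, (c * f x) ^ 2 ∂muI) = c ^ 2 * ∫ x, f x ^ 2 ∂muI := by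
    rw [← MeasureTheory.integral_const_mul]; congr 1; ext x; ring
  rw [this, Real.sqrt_mul (by positivity), Real.sqrt_sq hc]

lemma L2norm_one : L2norm (fun _ => (1:ℝ)) = 1 := by
  have : (∫ x, (1:ℝ) ∂muI) = 1 := by simp [muI_univ]
  simp only [L2norm, integral_I01, one_pow]
  rw [this, Real.sqrt_one]

lemma integral_abs_le_L2 {f : ℝ → ℝ} (hf : MemLp f 2 muI) :
    (∫ x in I01, |f x|) ≤ L2norm f := by
  have habs : MemLp (fun x => |f x|) 2 muI := hf.abs
  have h1 : MemLp (fun _ : ℝ => (1:ℝ)) 2 muI := memLp_const 1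
  have := integral_mul_le_L2 habs h1
  have hnn : 0 ≤ ∫ x in I01, |f x| * 1 := by
    rw [integral_I01]
    exact integral_nonneg (fun x => by positivity)
  have heq : L2norm (fun x => |f x|) = L2norm f := by
    unfold L2norm; congr 1; refine integral_congr_ae (Eventually.of_forall fun x => ?_)
    simp [sq_abs]
  calc (∫ x in I01, |f x|) = ∫ x in I01, |f x| * 1 := by simp
    _ ≤ L2norm (fun x => |f x|) * L2norm (fun _ => (1:ℝ)) := le_trans (le_abs_self _) this
    _ = L2norm f := by rw [heq, L2norm_one, mul_one]

lemma Tk_congr {V : ℝ → ℝ → ℝ} {f g : ℝ → ℝ} (h : f =ᵐ[muI] g) : Tk V f = Tk V g := by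
  funext x
  exact integral_congr_ae (h.mono fun y hy => by simp only [hy])

lemma Tk_measurable {V : ℝ → ℝ → ℝ} (hV : Measurable (Function.uncurry V)) {f : ℝ → ℝ}
    (hf : Measurable f) : Measurable (Tk V f) := by
  have : StronglyMeasurable fun p : ℝ × ℝ => V p.1 p.2 * f p.2 :=
    (hV.mul (hf.comp measurable_snd)).stronglyMeasurable
  exact this.integral_prod_right'.measurable

lemma Tk_bound {V : ℝ → ℝ → ℝ} {C : ℝ} (hV : Measurable (Function.uncurry V))
    (hVb : ∀ x y, |V x y| ≤ C) {f : ℝ → ℝ}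
    (hf : MemLp f 2 muI) (x : ℝ) : |Tk V f x| ≤ C * L2norm f := by
  have hC : 0 ≤ C := le_trans (abs_nonneg _) (hVb 0 0)
  have hfi : Integrable f muI := hf.integrable one_le_two
  have hVfi : Integrable (fun y => V x y * f y) muI := by
    apply hfi.bdd_mul (c := C)
      ((hV.comp measurable_prodMk_left).aestronglyMeasurable)
    exact Eventually.of_forall fun y => by simpa [Real.norm_eq_abs] using hVb x y
  calc |Tk V f x| ≤ ∫ y, |V x y * f y| ∂muI := by
        rw [Tk, integral_I01, ← Real.norm_eq_abs]
        refine le_trans (norm_integral_le_integral_norm _) ?_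
        refine le_of_eq (integral_congr_ae (Eventually.of_forall fun y => ?_))
        simp [Real.norm_eq_abs, abs_mul]
    _ ≤ ∫ y, C * |f y| ∂muI := by
        apply integral_mono_ae hVfi.abs (hfi.abs.const_mul C)
        refine Eventually.of_forall fun y => ?_
        simp only [abs_mul]
        exact mul_le_mul_of_nonneg_right (hVb x y) (abs_nonneg _)
    _ = C * ∫ y in I01, |f y| := by rw [integral_I01, MeasureTheory.integral_const_mul]
    _ ≤ C * L2norm f := mul_le_mul_of_nonneg_left (integral_abs_le_L2 hf) hC

lemma zero_mem_opSet (V : ℝ → ℝ → ℝ) :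
    (0:ℝ) ∈ {c | ∃ f : ℝ → ℝ, MemL2 f ∧ L2norm f ≤ 1 ∧ c = L2norm (Tk V f)} := by
  refine ⟨fun _ => 0, MemLp.zero', ?_, ?_⟩
  · simp only [L2norm]
    rw [show (∫ x in I01, ((fun _ => (0:ℝ)) x) ^ 2) = 0 by simp]
    simp [Real.sqrt_zero]
  · have : Tk V (fun _ => 0) = fun _ => 0 := by
      funext x; simp [Tk]
    rw [this]
    simp only [L2norm]
    rw [show (∫ x in I01, ((fun _ => (0:ℝ)) x) ^ 2) = 0 by simp]
    simp [Real.sqrt_zero]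

lemma opSet_bddAbove {V : ℝ → ℝ → ℝ} {C : ℝ} (hV : Measurable (Function.uncurry V))
    (hVb : ∀ x y, |V x y| ≤ C) :
    BddAbove {c | ∃ f : ℝ → ℝ, MemL2 f ∧ L2norm f ≤ 1 ∧ c = L2norm (Tk V f)} := by
  have hC : 0 ≤ C := le_trans (abs_nonneg _) (hVb 0 0)
  refine ⟨C, fun c hc => ?_⟩
  obtain ⟨f, hf, hf1, rfl⟩ := hc
  set g := hf.aestronglyMeasurable.mk f with hg
  have hfg : f =ᵐ[muI] g := hf.aestronglyMeasurable.ae_eq_mk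
  have hgm : Measurable g := by
    have := hf.aestronglyMeasurable.stronglyMeasurable_mk
    exact this.measurable
  have hgL2 : MemLp g 2 muI := hf.ae_eq hfg
  have hTk : Tk V f = Tk V g := Tk_congr hfg
  have hL2g : L2norm g = L2norm f := (L2norm_congr hfg).symm
  rw [hTk]
  have hb : ∀ x, |Tk V g x| ≤ C * L2norm g := Tk_bound hV hVb hgL2
  have := L2norm_le_of_bound (Tk_measurable hV hgm).aestronglyMeasurable
    (mul_nonneg hC (L2norm_nonneg g)) (Eventually.of_forall hb)
  calc L2norm (Tk V g) ≤ C * L2norm g := this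
    _ ≤ C * 1 := by rw [hL2g]; exact mul_le_mul_of_nonneg_left hf1 hC
    _ = C := mul_one C

lemma opNorm_nonneg {V : ℝ → ℝ → ℝ} {C : ℝ} (hV : Measurable (Function.uncurry V))
    (hVb : ∀ x y, |V x y| ≤ C) : 0 ≤ opNorm V :=
  le_csSup (opSet_bddAbove hV hVb) (zero_mem_opSet V)

lemma L2norm_Tk_le {V : ℝ → ℝ → ℝ} {C : ℝ} (hV : Measurable (Function.uncurry V))
    (hVb : ∀ x y, |V x y| ≤ C) {f : ℝ → ℝ} (hf : MemLp f 2 muI) :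
    L2norm (Tk V f) ≤ opNorm V * L2norm f := by
  rcases eq_or_lt_of_le (L2norm_nonneg f) with h0 | hpos
  · -- L2norm f = 0, so f = 0 a.e., so Tk V f = 0
    have hint : (∫ x, f x ^ 2 ∂muI) = 0 := by
      have h1 : Real.sqrt (∫ x, f x ^ 2 ∂muI) = 0 := by
        rw [← integral_I01]; exact h0.symm
      have h2 : (0:ℝ) ≤ ∫ x, f x ^ 2 ∂muI := integral_nonneg fun x => sq_nonneg _
      nlinarith [Real.sq_sqrt h2, Real.sqrt_nonneg (∫ x, f x ^ 2 ∂muI)]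
    have hae : f =ᵐ[muI] fun _ => 0 := by
      have hsq : (fun x => f x ^ 2) =ᵐ[muI] 0 :=
        (integral_eq_zero_iff_of_nonneg (fun x => sq_nonneg _) hf.integrable_sq).mp hint
      filter_upwards [hsq] with x hx
      exact pow_eq_zero_iff (n := 2) (by norm_num) |>.mp hx
    have : Tk V f = fun _ => 0 := by
      rw [Tk_congr hae]; funext x; simp [Tk]
    rw [this, ← h0]
    have : L2norm (fun _ : ℝ => (0:ℝ)) = 0 := by
      simp only [L2norm]
      rw [show (∫ x in I01, ((fun _ => (0:ℝ)) x) ^ 2) = 0 by simp]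
      exact Real.sqrt_zero
    rw [this]; exact le_of_eq (by ring)
  · set c := L2norm f with hc
    have hcin : c⁻¹ * c = 1 := inv_mul_cancel₀ (ne_of_gt hpos)
    have hinv : (0:ℝ) ≤ c⁻¹ := le_of_lt (inv_pos.mpr hpos)
    have hh : MemLp (fun x => c⁻¹ * f x) 2 muI := by
      simpa using hf.const_mul c⁻¹
    have hh1 : L2norm (fun x => c⁻¹ * f x) = 1 := by
      rw [L2norm_const_mul c⁻¹ hinv, ← hc, hcin]
    have hTks : Tk V (fun x => c⁻¹ * f x) = fun x => c⁻¹ * Tk V f x := by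
      funext x
      simp only [Tk, integral_I01]
      rw [← MeasureTheory.integral_const_mul]
      congr 1; funext y; ring
    have hmem : L2norm (Tk V (fun x => c⁻¹ * f x)) ∈
        {d | ∃ h : ℝ → ℝ, MemL2 h ∧ L2norm h ≤ 1 ∧ d = L2norm (Tk V h)} :=
      ⟨_, hh, le_of_eq hh1, rfl⟩
    have hle : L2norm (Tk V (fun x => c⁻¹ * f x)) ≤ opNorm V :=
      le_csSup (opSet_bddAbove hV hVb) hmem
    rw [hTks, L2norm_const_mul c⁻¹ hinv] at hle
    calc L2norm (Tk V f) = c * (c⁻¹ * L2norm (Tk V f)) := by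
          field_simp
      _ ≤ c * opNorm V := mul_le_mul_of_nonneg_left hle (le_of_lt hpos)
      _ = opNorm V * L2norm f := by rw [mul_comm, hc]

lemma stepIdx_measurable (n : ℕ) (hn : 0 < n) : Measurable (stepIdx n hn) := by
  have : stepIdx n hn = (fun m : ℕ =>
      (⟨min (n - 1) (m - 1), lt_of_le_of_lt (min_le_left _ _) (Nat.sub_lt hn Nat.one_pos)⟩ : Fin n))
      ∘ (fun x : ℝ => Nat.ceil ((n : ℝ) * x)) := rfl
  rw [this]
  exact Measurable.comp (measurable_from_top) (Nat.measurable_ceil.comp (measurable_const_mul _))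

lemma stepKer_measurable {n : ℕ} (hn : 0 < n) (A : Fin n → Fin n → ℝ) :
    Measurable (Function.uncurry (stepKer hn A)) := by
  have : Function.uncurry (stepKer hn A) =
      (fun p : Fin n × Fin n => A p.1 p.2) ∘
      (fun p : ℝ × ℝ => (stepIdx n hn p.1, stepIdx n hn p.2)) := rfl
  rw [this]
  exact Measurable.comp (measurable_of_countable _)
    (((stepIdx_measurable n hn).comp measurable_fst).prodMk
      ((stepIdx_measurable n hn).comp measurable_snd))

lemma stepFun_measurable {n : ℕ} (hn : 0 < n) (v : Fin n → ℝ) :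
    Measurable (stepFun hn v) :=
  Measurable.comp (measurable_from_top) (stepIdx_measurable n hn)

lemma CuT_nonneg (u : ℝ → ℝ → ℝ) (T : ℝ) : 0 ≤ CuT u T := ENNReal.toReal_nonneg

lemma ae_bound_CuT {u : ℝ → ℝ → ℝ} {T M : ℝ} (hT : 0 < T)
    (hcont : ∀ x ∈ I01, ∀ t : ℝ, 0 ≤ t → ContinuousAt (u x) t)
    (hM : ∀ x ∈ I01, ∀ t ∈ Set.Icc (0:ℝ) T, |u x t| ≤ M) :
    ∀ᵐ x ∂muI, ∀ t ∈ Set.Icc (0:ℝ) T, |u x t| ≤ CuT u T := by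
  have hνdef : True := trivial
  -- a.e. point of the product is in I01 ×ˢ Icc 0 T
  have hae1 : ∀ᵐ p ∂(muI.prod (MeasureTheory.volume.restrict (Set.Icc (0 : ℝ) T))), p.1 ∈ I01 := by
    rw [ae_iff]
    have hsub : {p : ℝ × ℝ | ¬ p.1 ∈ I01} ⊆ I01ᶜ ×ˢ Set.univ := by
      intro p hp; exact ⟨hp, trivial⟩
    refine measure_mono_null hsub ?_
    rw [Measure.prod_prod]
    have : muI I01ᶜ = 0 := by
      have hI : MeasurableSet I01 := measurableSet_Icc
      rw [muI, Measure.restrict_apply hI.compl, Set.compl_inter_self, measure_empty]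
    rw [this, zero_mul]
  have hae2 : ∀ᵐ p ∂(muI.prod (MeasureTheory.volume.restrict (Set.Icc (0 : ℝ) T))), p.2 ∈ Set.Icc (0:ℝ) T := by
    rw [ae_iff]
    have hsub : {p : ℝ × ℝ | ¬ p.2 ∈ Set.Icc (0:ℝ) T} ⊆ Set.univ ×ˢ (Set.Icc (0:ℝ) T)ᶜ := by
      intro p hp; exact ⟨trivial, hp⟩
    refine measure_mono_null hsub ?_
    rw [Measure.prod_prod]
    have : (MeasureTheory.volume.restrict (Set.Icc (0 : ℝ) T)) (Set.Icc (0:ℝ) T)ᶜ = 0 := by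
      rw [Measure.restrict_apply (measurableSet_Icc.compl), Set.compl_inter_self, measure_empty]
    rw [this, mul_zero]
  -- essential sup is finite
  have hfin : eLpNormEssSup (fun p : ℝ × ℝ => u p.1 p.2) (muI.prod (MeasureTheory.volume.restrict (Set.Icc (0 : ℝ) T))) ≠ ⊤ := by
    refine ne_of_lt (eLpNormEssSup_lt_top_of_ae_bound (C := M) ?_)
    filter_upwards [hae1, hae2] with p h1 h2
    rw [Real.norm_eq_abs]
    exact hM p.1 h1 p.2 h2
  -- a.e. bound on the product
  have haeb : ∀ᵐ p ∂(muI.prod (MeasureTheory.volume.restrict (Set.Icc (0 : ℝ) T))), |u p.1 p.2| ≤ CuT u T := by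
    have := ae_le_eLpNormEssSup (f := fun p : ℝ × ℝ => u p.1 p.2) (μ := muI.prod (MeasureTheory.volume.restrict (Set.Icc (0 : ℝ) T)))
    filter_upwards [this] with p hp
    have h1 := ENNReal.toReal_mono hfin hp
    rw [CuT, eLpNorm_exponent_top]
    simpa [Real.norm_eq_abs] using h1
  -- pass to iterated a.e.
  have haex : ∀ᵐ x ∂muI, ∀ᵐ t ∂(MeasureTheory.volume.restrict (Set.Icc (0 : ℝ) T)),
      |u x t| ≤ CuT u T := MeasureTheory.Measure.ae_ae_of_ae_prod haeb
  have haemem : ∀ᵐ x ∂muI, x ∈ I01 := ae_restrict_mem measurableSet_Icc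
  filter_upwards [haex, haemem] with x hx hxI
  -- density argument
  intro t ht
  set Cu := CuT u T with hCu
  set C := Set.Icc (0:ℝ) T ∩ (fun s => |u x s|) ⁻¹' Set.Iic Cu with hC
  have hcC : ContinuousOn (fun s => |u x s|) (Set.Icc (0:ℝ) T) := by
    intro s hs
    exact ((hcont x hxI s hs.1).continuousWithinAt).abs
  have hclosed : IsClosed C := hcC.preimage_isClosed_of_isClosed isClosed_Icc isClosed_Iic
  have hnull : (MeasureTheory.volume.restrict (Set.Icc (0 : ℝ) T)) {s | ¬ |u x s| ≤ Cu} = 0 := by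
    rw [← ae_iff]; exact hx
  suffices htc : t ∈ C by exact htc.2
  rw [← hclosed.closure_eq]
  rw [Metric.mem_closure_iff]
  intro ε hε
  set a := max (t - ε/2) 0 with ha
  set b := min (t + ε/2) T with hb
  have hab : a < b := by
    rw [ha, hb, max_lt_iff]
    constructor
    · rw [lt_min_iff]; constructor
      · linarith
      · linarith [ht.2]
    · rw [lt_min_iff]; constructor
      · linarith [ht.1]
      · exact hT
  have hsubI : Set.Ioo a b ⊆ Set.Icc (0:ℝ) T := fun s hs =>
    ⟨le_of_lt (lt_of_le_of_lt (le_max_right _ _) hs.1),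
     le_of_lt (lt_of_lt_of_le hs.2 (min_le_right _ _))⟩
  have hpos : 0 < (MeasureTheory.volume.restrict (Set.Icc (0 : ℝ) T)) (Set.Ioo a b) := by
    rw [Measure.restrict_apply measurableSet_Ioo]
    rw [Set.inter_eq_self_of_subset_left hsubI]
    rw [Real.volume_Ioo]
    exact ENNReal.ofReal_pos.mpr (by linarith)
  have hmeet : ∃ s ∈ Set.Ioo a b, |u x s| ≤ Cu := by
    by_contra hcon
    push_neg at hcon
    have : Set.Ioo a b ⊆ {s | ¬ |u x s| ≤ Cu} := fun s hs => not_le.mpr (hcon s hs)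
    have := measure_mono_null this hnull
    rw [this] at hpos
    exact lt_irrefl 0 hpos
  obtain ⟨s, hs, hsb⟩ := hmeet
  refine ⟨s, ⟨hsubI hs, hsb⟩, ?_⟩
  rw [Real.dist_eq, abs_sub_lt_iff]
  constructor
  · have : a ≥ t - ε/2 := le_max_left _ _
    linarith [hs.1, hε]
  · have : b ≤ t + ε/2 := min_le_left _ _
    linarith [hs.2, hε]

section psiDeriv

variable {V1 V2 : ℝ → ℝ → ℝ} {u1 u2 : ℝ → ℝ → ℝ} {T' M1 M2 : ℝ}

lemma intWu_measurable {V : ℝ → ℝ → ℝ} (hV : Measurable (Function.uncurry V))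
    {f : ℝ → ℝ} (hf : Measurable f) :
    Measurable (fun x => ∫ y in I01, V x y * f y) := Tk_measurable hV hf

lemma intabsW_measurable {V : ℝ → ℝ → ℝ} (hV : Measurable (Function.uncurry V)) :
    Measurable (fun x => ∫ y in I01, |V x y|) := by
  have : StronglyMeasurable fun p : ℝ × ℝ => |V p.1 p.2| :=
    (hV.abs).stronglyMeasurable
  exact this.integral_prod_right'.measurable

lemma intWu_bound {V : ℝ → ℝ → ℝ} (hVb : ∀ x y, |V x y| ≤ 1) {f : ℝ → ℝ} {M : ℝ}
    (hfb : ∀ᵐ y ∂muI, |f y| ≤ M) (x : ℝ) : |∫ y in I01, V x y * f y| ≤ M := by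
  rw [integral_I01, ← Real.norm_eq_abs]
  have := norm_integral_le_of_norm_le_const (μ := muI) (f := fun y => V x y * f y) (C := M) ?_
  · simpa [muI_univ] using this
  · filter_upwards [hfb] with y hy
    rw [Real.norm_eq_abs, abs_mul]
    calc |V x y| * |f y| ≤ 1 * M :=
          mul_le_mul (hVb x y) hy (abs_nonneg _) zero_le_one
      _ = M := one_mul M

lemma intabsW_bound {V : ℝ → ℝ → ℝ} (hVb : ∀ x y, |V x y| ≤ 1) (x : ℝ) :
    |(∫ y in I01, |V x y|)| ≤ 1 := by
  rw [integral_I01, ← Real.norm_eq_abs]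
  have := norm_integral_le_of_norm_le_const (μ := muI) (f := fun y => |V x y|) (C := 1) ?_
  · simpa [muI_univ] using this
  · exact Eventually.of_forall fun y => by
      rw [Real.norm_eq_abs, abs_abs]; exact hVb x y

lemma intabsW_nonneg (V : ℝ → ℝ → ℝ) (x : ℝ) : 0 ≤ ∫ y in I01, |V x y| := by
  rw [integral_I01]; exact integral_nonneg fun y => abs_nonneg _

/-- The right-hand side of the opposing dynamics. -/
def RHS (V : ℝ → ℝ → ℝ) (u : ℝ → ℝ → ℝ) (x t : ℝ) : ℝ :=
  (∫ y in I01, V x y * u y t) - (∫ y in I01, |V x y|) * u x t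

lemma RHS_bound {V : ℝ → ℝ → ℝ} (hVb : ∀ x y, |V x y| ≤ 1) {u : ℝ → ℝ → ℝ} {M : ℝ}
    {t : ℝ} (hub : ∀ᵐ y ∂muI, |u y t| ≤ M) {x : ℝ} (hx : |u x t| ≤ M) :
    |RHS V u x t| ≤ 2 * M := by
  have h1 : |∫ y in I01, V x y * u y t| ≤ M := intWu_bound hVb hub x
  have h2 : |(∫ y in I01, |V x y|) * u x t| ≤ M := by
    rw [abs_mul]
    calc |(∫ y in I01, |V x y|)| * |u x t| ≤ 1 * M :=
      mul_le_mul (intabsW_bound hVb x) hx (abs_nonneg _) zero_le_one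
    _ = M := one_mul M
  calc |RHS V u x t| ≤ |∫ y in I01, V x y * u y t| + |(∫ y in I01, |V x y|) * u x t| :=
        abs_sub _ _
    _ ≤ M + M := add_le_add h1 h2
    _ = 2 * M := by ring

lemma RHS_measurable {V : ℝ → ℝ → ℝ} (hV : Measurable (Function.uncurry V))
    {u : ℝ → ℝ → ℝ} {t : ℝ} (hu : Measurable (fun x => u x t)) :
    Measurable (fun x => RHS V u x t) :=
  ((intWu_measurable hV hu).sub ((intabsW_measurable hV).mul hu))

lemma psi_hasDeriv
    (hV1 : Measurable (Function.uncurry V1)) (hV2 : Measurable (Function.uncurry V2))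
    (hV1b : ∀ x y, |V1 x y| ≤ 1) (hV2b : ∀ x y, |V2 x y| ≤ 1)
    (h1m : ∀ t : ℝ, 0 ≤ t → Measurable (fun x => u1 x t))
    (h2m : ∀ t : ℝ, 0 ≤ t → Measurable (fun x => u2 x t))
    (h1d : ∀ x ∈ I01, ∀ t : ℝ, 0 ≤ t → HasDerivAt (u1 x) (RHS V1 u1 x t) t)
    (h2d : ∀ x ∈ I01, ∀ t : ℝ, 0 ≤ t → HasDerivAt (u2 x) (RHS V2 u2 x t) t)
    (h1b : ∀ x ∈ I01, ∀ t ∈ Set.Icc (0:ℝ) T', |u1 x t| ≤ M1)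
    (h2b : ∀ x ∈ I01, ∀ t ∈ Set.Icc (0:ℝ) T', |u2 x t| ≤ M2)
    {t₀ : ℝ} (ht₀ : t₀ ∈ Set.Ioo 0 T') :
    HasDerivAt (fun t => ∫ x, (u1 x t - u2 x t)^2 ∂muI)
      (∫ x, 2 * (u1 x t₀ - u2 x t₀) * (RHS V1 u1 x t₀ - RHS V2 u2 x t₀) ∂muI) t₀ := by
  have hM1 : 0 ≤ M1 := le_trans (abs_nonneg _)
    (h1b 0 ⟨le_refl 0, zero_le_one⟩ 0 ⟨le_refl 0, le_of_lt (lt_trans ht₀.1 ht₀.2)⟩)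
  have hM2 : 0 ≤ M2 := le_trans (abs_nonneg _)
    (h2b 0 ⟨le_refl 0, zero_le_one⟩ 0 ⟨le_refl 0, le_of_lt (lt_trans ht₀.1 ht₀.2)⟩)
  set B := M1 + M2 with hB
  set ε₀ := min t₀ (T' - t₀) with hε₀
  have hε₀pos : 0 < ε₀ := lt_min ht₀.1 (by linarith [ht₀.2])
  have hball : ∀ t ∈ Metric.ball t₀ ε₀, t ∈ Set.Icc (0:ℝ) T' := by
    intro t ht
    rw [Metric.mem_ball, Real.dist_eq, abs_sub_lt_iff] at ht
    constructor
    · have : ε₀ ≤ t₀ := min_le_left _ _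
      linarith [ht.2]
    · have : ε₀ ≤ T' - t₀ := min_le_right _ _
      linarith [ht.1]
  have haeI : ∀ᵐ x ∂muI, x ∈ I01 := ae_restrict_mem measurableSet_Icc
  have haeb : ∀ᵐ y ∂muI, ∀ t ∈ Set.Icc (0:ℝ) T', |u1 y t| ≤ M1 ∧ |u2 y t| ≤ M2 := by
    filter_upwards [haeI] with y hy
    exact fun t ht => ⟨h1b y hy t ht, h2b y hy t ht⟩
  refine (hasDerivAt_integral_of_dominated_loc_of_deriv_le (μ := muI)
    (F := fun t x => (u1 x t - u2 x t)^2)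
    (F' := fun t x => 2 * (u1 x t - u2 x t) * (RHS V1 u1 x t - RHS V2 u2 x t))
    (bound := fun _ => 2 * B * (4 * B)) (Metric.ball_mem_nhds t₀ hε₀pos) ?_ ?_ ?_ ?_ ?_ ?_).2
  · -- hF_meas
    filter_upwards [Metric.ball_mem_nhds t₀ hε₀pos] with t ht
    have ht0 : (0:ℝ) ≤ t := (hball t ht).1
    exact (((h1m t ht0).sub (h2m t ht0)).pow_const 2).aestronglyMeasurable
  · -- hF_int
    have ht00 : (0:ℝ) ≤ t₀ := le_of_lt ht₀.1
    refine (integrable_const (B^2)).mono'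
      ((((h1m t₀ ht00).sub (h2m t₀ ht00)).pow_const 2).aestronglyMeasurable) ?_
    filter_upwards [haeI] with x hx
    have h1 := h1b x hx t₀ ⟨ht00, le_of_lt ht₀.2⟩
    have h2 := h2b x hx t₀ ⟨ht00, le_of_lt ht₀.2⟩
    have hd : |u1 x t₀ - u2 x t₀| ≤ B := by
      calc |u1 x t₀ - u2 x t₀| ≤ |u1 x t₀| + |u2 x t₀| := abs_sub _ _
        _ ≤ M1 + M2 := add_le_add h1 h2
    rw [Real.norm_eq_abs, abs_pow]
    exact pow_le_pow_left₀ (abs_nonneg _) hd 2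
  · -- hF'_meas
    have ht00 : (0:ℝ) ≤ t₀ := le_of_lt ht₀.1
    exact ((measurable_const.mul ((h1m t₀ ht00).sub (h2m t₀ ht00))).mul
      ((RHS_measurable hV1 (h1m t₀ ht00)).sub (RHS_measurable hV2 (h2m t₀ ht00)))).aestronglyMeasurable
  · -- h_bound
    filter_upwards [haeI, haeb] with x hx hb
    intro t ht
    have htI : t ∈ Set.Icc (0:ℝ) T' := hball t ht
    have hub1 : ∀ᵐ y ∂muI, |u1 y t| ≤ M1 := by
      filter_upwards [haeb] with y hy using (hy t htI).1
    have hub2 : ∀ᵐ y ∂muI, |u2 y t| ≤ M2 := by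
      filter_upwards [haeb] with y hy using (hy t htI).2
    have hr1 : |RHS V1 u1 x t| ≤ 2 * M1 := RHS_bound hV1b hub1 (hb t htI).1
    have hr2 : |RHS V2 u2 x t| ≤ 2 * M2 := RHS_bound hV2b hub2 (hb t htI).2
    have hd : |u1 x t - u2 x t| ≤ B := by
      calc |u1 x t - u2 x t| ≤ |u1 x t| + |u2 x t| := abs_sub _ _
        _ ≤ M1 + M2 := add_le_add (hb t htI).1 (hb t htI).2
    have hrr : |RHS V1 u1 x t - RHS V2 u2 x t| ≤ 4 * B := by
      calc |RHS V1 u1 x t - RHS V2 u2 x t| ≤ |RHS V1 u1 x t| + |RHS V2 u2 x t| := abs_sub _ _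
        _ ≤ 2 * M1 + 2 * M2 := add_le_add hr1 hr2
        _ ≤ 4 * B := by rw [hB]; nlinarith
    rw [Real.norm_eq_abs, abs_mul, abs_mul, abs_two]
    have hBnn : (0:ℝ) ≤ B := by rw [hB]; linarith
    have hgoal : 2 * |u1 x t - u2 x t| * |RHS V1 u1 x t - RHS V2 u2 x t|
        ≤ 2 * B * (4 * B) := by
      apply mul_le_mul _ hrr (abs_nonneg _) (by positivity)
      exact mul_le_mul_of_nonneg_left hd (by norm_num)
    exact hgoal
  · -- bound integrable
    exact integrable_const _
  · -- h_diff
    filter_upwards [haeI] with x hx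
    intro t ht
    have ht0 : (0:ℝ) ≤ t := (hball t ht).1
    have hD : HasDerivAt (fun s => u1 x s - u2 x s)
        (RHS V1 u1 x t - RHS V2 u2 x t) t := (h1d x hx t ht0).sub (h2d x hx t ht0)
    have := hD.fun_pow 2
    simpa [mul_comm, mul_assoc, mul_left_comm] using this

end psiDeriv

lemma psi_contWithinAt_zero
    {u1 u2 : ℝ → ℝ → ℝ} {T' M1 M2 : ℝ} (hT' : 0 < T')
    (h1m : ∀ t : ℝ, 0 ≤ t → Measurable (fun x => u1 x t))
    (h2m : ∀ t : ℝ, 0 ≤ t → Measurable (fun x => u2 x t))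
    (h1c : ∀ x ∈ I01, ContinuousAt (u1 x) 0)
    (h2c : ∀ x ∈ I01, ContinuousAt (u2 x) 0)
    (h1b : ∀ x ∈ I01, ∀ t ∈ Set.Icc (0:ℝ) T', |u1 x t| ≤ M1)
    (h2b : ∀ x ∈ I01, ∀ t ∈ Set.Icc (0:ℝ) T', |u2 x t| ≤ M2) :
    ContinuousWithinAt (fun t => ∫ x, (u1 x t - u2 x t)^2 ∂muI) (Set.Ici 0) 0 := by
  have haeI : ∀ᵐ x ∂muI, x ∈ I01 := ae_restrict_mem measurableSet_Icc
  have hev : ∀ᶠ t in 𝓝[Set.Ici (0:ℝ)] 0, t ∈ Set.Icc (0:ℝ) T' := by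
    have h1 : ∀ᶠ t in 𝓝[Set.Ici (0:ℝ)] 0, t ∈ Set.Ici (0:ℝ) := eventually_mem_nhdsWithin
    have h2 : ∀ᶠ t in 𝓝[Set.Ici (0:ℝ)] 0, t ∈ Set.Iic T' :=
      mem_nhdsWithin_of_mem_nhds (Iic_mem_nhds hT')
    filter_upwards [h1, h2] with t ht1 ht2
    exact ⟨ht1, ht2⟩
  apply MeasureTheory.continuousWithinAt_of_dominated
    (bound := fun _ => (M1 + M2)^2)
  · filter_upwards [hev] with t ht
    exact (((h1m t ht.1).sub (h2m t ht.1)).pow_const 2).aestronglyMeasurable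
  · filter_upwards [hev] with t ht
    filter_upwards [haeI] with x hx
    have h1 := h1b x hx t ht
    have h2 := h2b x hx t ht
    have hd : |u1 x t - u2 x t| ≤ M1 + M2 := by
      calc |u1 x t - u2 x t| ≤ |u1 x t| + |u2 x t| := abs_sub _ _
        _ ≤ M1 + M2 := add_le_add h1 h2
    rw [Real.norm_eq_abs, abs_pow]
    exact pow_le_pow_left₀ (abs_nonneg _) hd 2
  · exact integrable_const _
  · filter_upwards [haeI] with x hx
    exact (((h1c x hx).sub (h2c x hx)).pow 2).continuousWithinAt

lemma L2norm_neg (f : ℝ → ℝ) : L2norm (fun x => -(f x)) = L2norm f := by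
  unfold L2norm
  congr 1
  refine integral_congr_ae (Eventually.of_forall fun x => ?_)
  simp [neg_pow]

lemma L2norm_sub_le {f g : ℝ → ℝ} (hf : MemLp f 2 muI) (hg : MemLp g 2 muI) :
    L2norm (fun x => f x - g x) ≤ L2norm f + L2norm g := by
  have h1 : (fun x => f x - g x) = fun x => f x + (-(g x)) := funext fun x => sub_eq_add_neg _ _
  rw [h1]
  have h2 := L2norm_add_le hf hg.neg
  have h3 : L2norm (-g) = L2norm g := by
    have : (-g) = fun x => -(g x) := rfl
    rw [this, L2norm_neg]
  calc L2norm (fun x => f x + -g x) = L2norm fun x => f x + (-g) x := rfl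
    _ ≤ L2norm f + L2norm (-g) := h2
    _ = L2norm f + L2norm g := by rw [h3]

lemma L2norm_mono_ae {f g : ℝ → ℝ} (hf : AEStronglyMeasurable f muI) (hg : MemLp g 2 muI)
    (h : ∀ᵐ x ∂muI, |f x| ≤ |g x|) : L2norm f ≤ L2norm g := by
  have hfg2 : ∀ᵐ x ∂muI, f x ^ 2 ≤ g x ^ 2 := by
    filter_upwards [h] with x hx
    calc f x ^ 2 = |f x| ^ 2 := (sq_abs _).symm
      _ ≤ |g x| ^ 2 := by gcongr
      _ = g x ^ 2 := sq_abs _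
  have hm2 : AEStronglyMeasurable (fun x => f x ^ 2) muI := by
    have : (fun x => f x ^ 2) = fun x => f x * f x := funext fun x => pow_two (f x)
    rw [this]; exact hf.mul hf
  have hint : Integrable (fun x => f x ^ 2) muI := by
    refine hg.integrable_sq.mono' hm2 ?_
    filter_upwards [hfg2] with x hx
    rw [Real.norm_eq_abs, abs_pow, sq_abs]
    exact hx
  unfold L2norm
  rw [integral_I01, integral_I01]
  exact Real.sqrt_le_sqrt (integral_mono_ae hint hg.integrable_sq hfg2)

lemma integrable_ker_mul {V : ℝ → ℝ → ℝ} (hV : Measurable (Function.uncurry V))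
    (hVb : ∀ x y, |V x y| ≤ 1) {f : ℝ → ℝ} (hfi : Integrable f muI) (x : ℝ) :
    Integrable (fun y => V x y * f y) muI := by
  apply hfi.bdd_mul (c := 1) ((hV.comp measurable_prodMk_left).aestronglyMeasurable)
  exact Eventually.of_forall fun y => by simpa [Real.norm_eq_abs] using hVb x y

lemma max_diff_abs_le_one {a b : ℝ} (ha : |a| ≤ 1) (hb : |b| ≤ 1) :
    |max a 0 - max b 0| ≤ 1 := by
  rw [abs_le] at ha hb ⊢
  constructor
  · have : max b 0 ≤ 1 := max_le (by linarith [hb.2]) zero_le_one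
    have h0 : 0 ≤ max a 0 := le_max_right _ _
    linarith
  · have : max a 0 ≤ 1 := max_le (by linarith [ha.2]) zero_le_one
    have h0 : 0 ≤ max b 0 := le_max_right _ _
    linarith

lemma G_L2_bound {W K : ℝ → ℝ → ℝ}
    (hWm : Measurable (Function.uncurry W)) (hKm : Measurable (Function.uncurry K))
    (hW1 : ∀ x y, |W x y| ≤ 1) (hK1 : ∀ x y, |K x y| ≤ 1)
    {u un : ℝ → ℝ → ℝ} {t M1 M2 Cu : ℝ}
    (hum : Measurable (fun x => u x t)) (hunm : Measurable (fun x => un x t))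
    (hub : ∀ᵐ x ∂muI, |u x t| ≤ M1) (hunb : ∀ᵐ x ∂muI, |un x t| ≤ M2)
    (hCu : ∀ᵐ x ∂muI, |u x t| ≤ Cu) (hCunn : 0 ≤ Cu) :
    L2norm (fun x => RHS W u x t - RHS K un x t) ≤
      2 * L2norm (fun x => u x t - un x t) +
      2 * (Cu * (opNorm (fun x y => max (W x y) 0 - max (K x y) 0) +
                 opNorm (fun x y => max (-(W x y)) 0 - max (-(K x y)) 0))) := by
  set Vp : ℝ → ℝ → ℝ := fun x y => max (W x y) 0 - max (K x y) 0 with hVp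
  set Vm : ℝ → ℝ → ℝ := fun x y => max (-(W x y)) 0 - max (-(K x y)) 0 with hVm
  have hVpm : Measurable (Function.uncurry Vp) :=
    (hWm.max measurable_const).sub (hKm.max measurable_const)
  have hVmm : Measurable (Function.uncurry Vm) :=
    ((hWm.neg).max measurable_const).sub ((hKm.neg).max measurable_const)
  have hVpb : ∀ x y, |Vp x y| ≤ 1 := fun x y => max_diff_abs_le_one (hW1 x y) (hK1 x y)
  have hVmb : ∀ x y, |Vm x y| ≤ 1 := fun x y =>
    max_diff_abs_le_one (by rw [abs_neg]; exact hW1 x y) (by rw [abs_neg]; exact hK1 x y)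
  set εp := opNorm Vp with hεp
  set εm := opNorm Vm with hεm
  have hεpnn : 0 ≤ εp := opNorm_nonneg hVpm hVpb
  have hεmnn : 0 ≤ εm := opNorm_nonneg hVmm hVmb
  set Du : ℝ → ℝ := fun x => u x t - un x t with hDu
  set Ut : ℝ → ℝ := fun x => u x t with hUt
  have hDum : Measurable Du := hum.sub hunm
  have hDu2 : MemLp Du 2 muI := by
    apply memL2_of_bound hDum.aestronglyMeasurable (C := M1 + M2)
    filter_upwards [hub, hunb] with x h1 h2
    calc |Du x| ≤ |u x t| + |un x t| := abs_sub _ _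
      _ ≤ M1 + M2 := add_le_add h1 h2
  have hUt2 : MemLp Ut 2 muI := memL2_of_bound hum.aestronglyMeasurable hub
  have hUtCu : L2norm Ut ≤ Cu := L2norm_le_of_bound hum.aestronglyMeasurable hCunn hCu
  set one : ℝ → ℝ := fun _ => (1:ℝ) with hone
  have hone2 : MemLp one 2 muI := memLp_const 1
  have honeL2 : L2norm one = 1 := L2norm_one
  have hui : Integrable (fun y => u y t) muI := (memL2_of_bound hum.aestronglyMeasurable hub).integrable one_le_two
  have huni : Integrable (fun y => un y t) muI := (memL2_of_bound hunm.aestronglyMeasurable hunb).integrable one_le_two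
  have hDui : Integrable Du muI := hDu2.integrable one_le_two
  -- the five pieces
  set P1 : ℝ → ℝ := Tk K Du with hP1
  set P2 : ℝ → ℝ := fun x => (∫ y in I01, |K x y|) * Du x with hP2
  set P3 : ℝ → ℝ := Tk Vp Ut with hP3
  set P4 : ℝ → ℝ := Tk Vm Ut with hP4
  set Q : ℝ → ℝ := fun x => Tk Vp one x + Tk Vm one x with hQ
  set P5 : ℝ → ℝ := fun x => Q x * u x t with hP5
  -- pointwise kernel identities
  have hker : ∀ a b : ℝ, (max a 0 - max b 0) - (max (-a) 0 - max (-b) 0) = a - b := by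
    intro a b
    have h1 := max_zero_sub_max_neg_zero_eq_self a
    have h2 := max_zero_sub_max_neg_zero_eq_self b
    linarith
  have hkerabs : ∀ a b : ℝ, (max a 0 - max b 0) + (max (-a) 0 - max (-b) 0) = |a| - |b| := by
    intro a b
    have h1 : max a 0 + max (-a) 0 = |a| := max_zero_add_max_neg_zero_eq_abs_self a
    have h2 : max b 0 + max (-b) 0 = |b| := max_zero_add_max_neg_zero_eq_abs_self b
    linarith
  -- decomposition
  have hdecomp : ∀ x, RHS W u x t - RHS K un x t = (P1 x + (P3 x - P4 x)) - (P2 x + P5 x) := by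
    intro x
    have iWu : Integrable (fun y => W x y * u y t) muI := integrable_ker_mul hWm hW1 hui x
    have iKun : Integrable (fun y => K x y * un y t) muI := integrable_ker_mul hKm hK1 huni x
    have iKD : Integrable (fun y => K x y * Du y) muI := integrable_ker_mul hKm hK1 hDui x
    have iVpu : Integrable (fun y => Vp x y * u y t) muI := integrable_ker_mul hVpm hVpb hui x
    have iVmu : Integrable (fun y => Vm x y * u y t) muI := integrable_ker_mul hVmm hVmb hui x
    have iVp1 : Integrable (fun y => Vp x y * one y) muI := integrable_ker_mul hVpm hVpb (integrable_const 1) x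
    have iVm1 : Integrable (fun y => Vm x y * one y) muI := integrable_ker_mul hVmm hVmb (integrable_const 1) x
    have iabsW : Integrable (fun y => |W x y|) muI := by
      refine (integrable_const 1).mono'
        ((hWm.comp measurable_prodMk_left).abs.aestronglyMeasurable) ?_
      exact Eventually.of_forall fun y => by
        rw [Real.norm_eq_abs, abs_abs]; exact hW1 x y
    have iabsK : Integrable (fun y => |K x y|) muI := by
      refine (integrable_const 1).mono'
        ((hKm.comp measurable_prodMk_left).abs.aestronglyMeasurable) ?_
      exact Eventually.of_forall fun y => by
        rw [Real.norm_eq_abs, abs_abs]; exact hK1 x y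
    have iKD' : Integrable (fun y => K x y * Du y) muI := iKD
    have iVpu' : Integrable (fun y => Vp x y * Ut y) muI := iVpu
    have iVmu' : Integrable (fun y => Vm x y * Ut y) muI := iVmu
    have isub : Integrable (fun y => Vp x y * Ut y - Vm x y * Ut y) muI := iVpu'.sub iVmu'
    have e1 : (∫ y in I01, W x y * u y t) - (∫ y in I01, K x y * un y t)
        = P1 x + (P3 x - P4 x) := by
      calc (∫ y in I01, W x y * u y t) - (∫ y in I01, K x y * un y t)
          = ∫ y, (W x y * u y t - K x y * un y t) ∂muI := by
            rw [integral_I01, integral_I01, ← integral_sub iWu iKun]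
        _ = ∫ y, (K x y * Du y + (Vp x y * Ut y - Vm x y * Ut y)) ∂muI := by
            refine integral_congr_ae (Eventually.of_forall fun y => ?_)
            have hid := hker (W x y) (K x y)
            simp only [hDu, hUt, hVp, hVm]
            linear_combination (-(u y t)) * hid
        _ = (∫ y, K x y * Du y ∂muI) + ∫ y, (Vp x y * Ut y - Vm x y * Ut y) ∂muI :=
            integral_add iKD' isub
        _ = (∫ y, K x y * Du y ∂muI) +
            ((∫ y, Vp x y * Ut y ∂muI) - ∫ y, Vm x y * Ut y ∂muI) := by
            rw [integral_sub iVpu' iVmu']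
        _ = P1 x + (P3 x - P4 x) := rfl
    have iVp1' : Integrable (fun y => Vp x y * one y) muI := iVp1
    have iVm1' : Integrable (fun y => Vm x y * one y) muI := iVm1
    have e3 : (∫ y in I01, |W x y|) - (∫ y in I01, |K x y|) = Q x := by
      calc (∫ y in I01, |W x y|) - (∫ y in I01, |K x y|)
          = ∫ y, (|W x y| - |K x y|) ∂muI := by
            rw [integral_I01, integral_I01, ← integral_sub iabsW iabsK]
        _ = ∫ y, (Vp x y * one y + Vm x y * one y) ∂muI := by
            refine integral_congr_ae (Eventually.of_forall fun y => ?_)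
            have hid := hkerabs (W x y) (K x y)
            simp only [hone, hVp, hVm, mul_one]
            linarith
        _ = (∫ y, Vp x y * one y ∂muI) + ∫ y, Vm x y * one y ∂muI :=
            integral_add iVp1' iVm1'
        _ = Q x := rfl
    have e2 : (∫ y in I01, |W x y|) * u x t - (∫ y in I01, |K x y|) * un x t
        = P2 x + P5 x := by
      have h3 : (∫ y in I01, |W x y|) = (∫ y in I01, |K x y|) + Q x := by linarith [e3]
      rw [h3]
      simp only [hP2, hP5, hDu]
      ring
    simp only [RHS]
    linarith [e1, e2]
  -- MemLp and bounds for the pieces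
  have hP1m : Measurable P1 := Tk_measurable hKm hDum
  have hP1b : L2norm P1 ≤ L2norm Du := by
    have := Tk_bound hKm hK1 hDu2
    have h := L2norm_le_of_bound hP1m.aestronglyMeasurable
      (mul_nonneg zero_le_one (L2norm_nonneg Du)) (Eventually.of_forall this)
    calc L2norm P1 ≤ 1 * L2norm Du := h
      _ = L2norm Du := one_mul _
  have hP2m : Measurable P2 := (intabsW_measurable hKm).mul hDum
  have hP2b : L2norm P2 ≤ L2norm Du := by
    apply L2norm_mono_ae hP2m.aestronglyMeasurable hDu2
    refine Eventually.of_forall fun x => ?_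
    simp only [hP2, abs_mul]
    calc |(∫ y in I01, |K x y|)| * |Du x| ≤ 1 * |Du x| :=
          mul_le_mul_of_nonneg_right (intabsW_bound hK1 x) (abs_nonneg _)
      _ = |Du x| := one_mul _
  have hP2L2 : MemLp P2 2 muI := by
    apply memL2_of_bound hP2m.aestronglyMeasurable (C := M1 + M2)
    filter_upwards [hub, hunb] with x h1 h2
    simp only [hP2, abs_mul]
    calc |(∫ y in I01, |K x y|)| * |Du x| ≤ 1 * |Du x| :=
          mul_le_mul_of_nonneg_right (intabsW_bound hK1 x) (abs_nonneg _)
      _ = |Du x| := one_mul _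
      _ ≤ |u x t| + |un x t| := abs_sub _ _
      _ ≤ M1 + M2 := add_le_add h1 h2
  have hP1L2 : MemLp P1 2 muI := by
    apply memL2_of_bound hP1m.aestronglyMeasurable (C := 1 * L2norm Du)
    exact Eventually.of_forall (Tk_bound hKm hK1 hDu2)
  have hP3m : Measurable P3 := Tk_measurable hVpm hum
  have hP3L2 : MemLp P3 2 muI := by
    apply memL2_of_bound hP3m.aestronglyMeasurable (C := 1 * L2norm Ut)
    exact Eventually.of_forall (Tk_bound hVpm hVpb hUt2)
  have hP3b : L2norm P3 ≤ εp * Cu := by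
    calc L2norm P3 ≤ εp * L2norm Ut := L2norm_Tk_le hVpm hVpb hUt2
      _ ≤ εp * Cu := mul_le_mul_of_nonneg_left hUtCu hεpnn
  have hP4m : Measurable P4 := Tk_measurable hVmm hum
  have hP4L2 : MemLp P4 2 muI := by
    apply memL2_of_bound hP4m.aestronglyMeasurable (C := 1 * L2norm Ut)
    exact Eventually.of_forall (Tk_bound hVmm hVmb hUt2)
  have hP4b : L2norm P4 ≤ εm * Cu := by
    calc L2norm P4 ≤ εm * L2norm Ut := L2norm_Tk_le hVmm hVmb hUt2
      _ ≤ εm * Cu := mul_le_mul_of_nonneg_left hUtCu hεmnn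
  have hTpm : Measurable (Tk Vp one) := Tk_measurable hVpm measurable_const
  have hTmm : Measurable (Tk Vm one) := Tk_measurable hVmm measurable_const
  have hTpL2 : MemLp (Tk Vp one) 2 muI := by
    apply memL2_of_bound hTpm.aestronglyMeasurable (C := 1 * L2norm one)
    exact Eventually.of_forall (Tk_bound hVpm hVpb hone2)
  have hTmL2 : MemLp (Tk Vm one) 2 muI := by
    apply memL2_of_bound hTmm.aestronglyMeasurable (C := 1 * L2norm one)
    exact Eventually.of_forall (Tk_bound hVmm hVmb hone2)
  have hQm : Measurable Q := hTpm.add hTmm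
  have hQL2 : MemLp Q 2 muI := hTpL2.add hTmL2
  have hQb : L2norm Q ≤ εp + εm := by
    have h1 : L2norm (Tk Vp one) ≤ εp := by
      have := L2norm_Tk_le hVpm hVpb hone2
      rwa [honeL2, mul_one] at this
    have h2 : L2norm (Tk Vm one) ≤ εm := by
      have := L2norm_Tk_le hVmm hVmb hone2
      rwa [honeL2, mul_one] at this
    calc L2norm Q ≤ L2norm (Tk Vp one) + L2norm (Tk Vm one) := L2norm_add_le hTpL2 hTmL2
      _ ≤ εp + εm := add_le_add h1 h2
  have hP5m : Measurable P5 := hQm.mul hum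
  have hP5b : L2norm P5 ≤ Cu * (εp + εm) := by
    have hmono : L2norm P5 ≤ L2norm (fun x => Cu * Q x) := by
      apply L2norm_mono_ae hP5m.aestronglyMeasurable (hQL2.const_mul Cu)
      filter_upwards [hCu] with x hx
      simp only [hP5, abs_mul]
      rw [abs_of_nonneg hCunn, mul_comm (Cu) (|Q x|)]
      exact mul_le_mul_of_nonneg_left hx (abs_nonneg _)
    calc L2norm P5 ≤ L2norm (fun x => Cu * Q x) := hmono
      _ = Cu * L2norm Q := L2norm_const_mul Cu hCunn Q
      _ ≤ Cu * (εp + εm) := mul_le_mul_of_nonneg_left hQb hCunn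
  have hP5L2 : MemLp P5 2 muI := by
    apply memL2_of_bound hP5m.aestronglyMeasurable (C := (1 * L2norm one + 1 * L2norm one) * M1)
    filter_upwards [hub] with x hx
    simp only [hP5, abs_mul]
    have hQxb : |Q x| ≤ 1 * L2norm one + 1 * L2norm one := by
      simp only [hQ]
      calc |Tk Vp one x + Tk Vm one x| ≤ |Tk Vp one x| + |Tk Vm one x| := abs_add_le _ _
        _ ≤ 1 * L2norm one + 1 * L2norm one :=
          add_le_add (Tk_bound hVpm hVpb hone2 x) (Tk_bound hVmm hVmb hone2 x)
    have hM1 : 0 ≤ M1 := le_trans (abs_nonneg _) hx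
    exact mul_le_mul hQxb hx (abs_nonneg _) (by positivity)
  -- assemble
  have hGeq : L2norm (fun x => RHS W u x t - RHS K un x t)
      = L2norm (fun x => (P1 x + (P3 x - P4 x)) - (P2 x + P5 x)) := by
    apply L2norm_congr
    exact Eventually.of_forall fun x => hdecomp x
  rw [hGeq]
  have step1 : L2norm (fun x => (P1 x + (P3 x - P4 x)) - (P2 x + P5 x))
      ≤ L2norm (fun x => P1 x + (P3 x - P4 x)) + L2norm (fun x => P2 x + P5 x) :=
    L2norm_sub_le (hP1L2.add (hP3L2.sub hP4L2)) (hP2L2.add hP5L2)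
  have step2 : L2norm (fun x => P1 x + (P3 x - P4 x))
      ≤ L2norm P1 + (L2norm P3 + L2norm P4) := by
    calc L2norm (fun x => P1 x + (P3 x - P4 x))
        ≤ L2norm P1 + L2norm (fun x => P3 x - P4 x) := L2norm_add_le hP1L2 (hP3L2.sub hP4L2)
      _ ≤ L2norm P1 + (L2norm P3 + L2norm P4) := by
          have := L2norm_sub_le hP3L2 hP4L2
          linarith
  have step3 : L2norm (fun x => P2 x + P5 x) ≤ L2norm P2 + L2norm P5 :=
    L2norm_add_le hP2L2 hP5L2
  calc L2norm (fun x => (P1 x + (P3 x - P4 x)) - (P2 x + P5 x))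
      ≤ (L2norm P1 + (L2norm P3 + L2norm P4)) + (L2norm P2 + L2norm P5) := by
        linarith [step1, step2, step3]
    _ ≤ (L2norm Du + (εp * Cu + εm * Cu)) + (L2norm Du + Cu * (εp + εm)) := by
        gcongr
    _ = 2 * L2norm Du + 2 * (Cu * (εp + εm)) := by ring


/-- convergence error estimate for the opposing dynamics:
`‖u(·,t) − uₙ(·,t)‖₂ ≤ (‖g − gₙ‖₂ + C_u(‖T_{W⁺} − T_{Wₙ⁺}‖ + ‖T_{W⁻} − T_{Wₙ⁻}‖)) e^{4T}`. -/
theorem opposing_error_estimate (W : ℝ → ℝ → ℝ) (g : ℝ → ℝ) (T mg : ℝ) (hT : 0 ≤ T)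
    (hWm : Measurable (Function.uncurry W)) (hsym : ∀ x y, W x y = W y x)
    (hW1 : ∀ x y, W x y ∈ Set.Icc (-1 : ℝ) 1)
    (hgm : Measurable g) (hgb : ∀ x, |g x| ≤ mg)
    (n : ℕ) (hn : 0 < n) (A : Fin n → Fin n → ℝ)
    (hA : ∀ i j, A i j = -1 ∨ A i j = 0 ∨ A i j = 1)
    (hAsym : ∀ i j, A i j = A j i) (gvec : Fin n → ℝ)
    (u un : ℝ → ℝ → ℝ)
    (hu : IsOpposingSol W g u)
    (hun : IsOpposingSol (stepKer hn A) (stepFun hn gvec) un) :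
    ∀ t ∈ Set.Icc (0 : ℝ) T,
      L2norm (fun x => u x t - un x t) ≤
        (L2norm (fun x => g x - stepFun hn gvec x) +
          CuT u T *
            (opNorm (fun x y => max (W x y) 0 - max (stepKer hn A x y) 0) +
             opNorm (fun x y => max (-(W x y)) 0 - max (-(stepKer hn A x y)) 0))) *
        Real.exp (4 * T) := by
  intro t ht
  set K := stepKer hn A with hKdef
  set gn := stepFun hn gvec with hgndef
  have hKm : Measurable (Function.uncurry K) := stepKer_measurable hn A
  have hW1' : ∀ x y, |W x y| ≤ 1 := fun x y => abs_le.mpr ⟨(hW1 x y).1, (hW1 x y).2⟩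
  have hK1' : ∀ x y, |K x y| ≤ 1 := by
    intro x y
    rcases hA (stepIdx n hn x) (stepIdx n hn y) with h | h | h <;>
      simp [hKdef, stepKer, h]
  set Vp : ℝ → ℝ → ℝ := fun x y => max (W x y) 0 - max (K x y) 0 with hVp
  set Vm : ℝ → ℝ → ℝ := fun x y => max (-(W x y)) 0 - max (-(K x y)) 0 with hVm
  have hVpm : Measurable (Function.uncurry Vp) :=
    (hWm.max measurable_const).sub (hKm.max measurable_const)
  have hVmm : Measurable (Function.uncurry Vm) :=
    ((hWm.neg).max measurable_const).sub ((hKm.neg).max measurable_const)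
  have hVpb : ∀ x y, |Vp x y| ≤ 1 := fun x y => max_diff_abs_le_one (hW1' x y) (hK1' x y)
  have hVmb : ∀ x y, |Vm x y| ≤ 1 := fun x y =>
    max_diff_abs_le_one (by rw [abs_neg]; exact hW1' x y) (by rw [abs_neg]; exact hK1' x y)
  set c : ℝ := CuT u T * (opNorm Vp + opNorm Vm) with hc
  have hcnn : 0 ≤ c := by
    apply mul_nonneg (CuT_nonneg u T)
    exact add_nonneg (opNorm_nonneg hVpm hVpb) (opNorm_nonneg hVmm hVmb)
  -- ψ and basic facts
  set ψ : ℝ → ℝ := fun s => ∫ x, (u x s - un x s)^2 ∂muI with hψ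
  have hψnn : ∀ s, 0 ≤ ψ s := fun s => integral_nonneg fun x => sq_nonneg _
  have hψ0 : Real.sqrt (ψ 0) = L2norm (fun x => g x - gn x) := by
    rw [L2norm]
    congr 1
    rw [integral_I01]
    apply integral_congr_ae
    filter_upwards [(ae_restrict_mem measurableSet_Icc : ∀ᵐ x ∂muI, x ∈ I01)] with x hx
    rw [hu.1 x hx, hun.1 x hx]
  have hLHS : L2norm (fun x => u x t - un x t) = Real.sqrt (ψ t) := rfl
  -- trivial case t = 0
  rcases eq_or_lt_of_le ht.1 with h0 | htpos
  · rw [hLHS, ← h0, hψ0]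
    have he : (1:ℝ) ≤ Real.exp (4 * T) := Real.one_le_exp (by linarith)
    have hl := L2norm_nonneg (fun x => g x - gn x)
    nlinarith
  -- main case
  have hTpos : 0 < T := lt_of_lt_of_le htpos ht.2
  set T' : ℝ := T + 1 with hT'def
  have hT' : 0 < T' := by rw [hT'def]; linarith
  obtain ⟨M1, hM1⟩ := hu.2.2.1 T' hT'
  obtain ⟨M2, hM2⟩ := hun.2.2.1 T' hT'
  have hsubT : Set.Icc (0:ℝ) T ⊆ Set.Icc (0:ℝ) T' :=
    Set.Icc_subset_Icc_right (by rw [hT'def]; linarith)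
  have haeI : ∀ᵐ x ∂muI, x ∈ I01 := ae_restrict_mem measurableSet_Icc
  have hCuae : ∀ᵐ x ∂muI, ∀ s ∈ Set.Icc (0:ℝ) T, |u x s| ≤ CuT u T := by
    apply ae_bound_CuT (M := M1) hTpos
    · exact fun x hx s hs => (hu.2.2.2 x hx s hs).continuousAt
    · exact fun x hx s hs => hM1 x hx s (hsubT hs)
  -- ψ' and its properties
  set ψ' : ℝ → ℝ := fun s => ∫ x, 2 * (u x s - un x s) * (RHS W u x s - RHS K un x s) ∂muI
    with hψ'def
  have hψ'deriv : ∀ s ∈ Set.Ioo (0:ℝ) T', HasDerivAt ψ (ψ' s) s := by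
    intro s hs
    exact psi_hasDeriv hWm hKm hW1' hK1' hu.2.1 hun.2.1 hu.2.2.2 hun.2.2.2 hM1 hM2 hs
  have hψ'bound : ∀ s ∈ Set.Icc (0:ℝ) T,
      |ψ' s| ≤ 2 * Real.sqrt (ψ s) * (2 * Real.sqrt (ψ s) + 2 * c) := by
    intro s hs
    have hs0 : (0:ℝ) ≤ s := hs.1
    have hsT' : s ∈ Set.Icc (0:ℝ) T' := hsubT hs
    have hub : ∀ᵐ x ∂muI, |u x s| ≤ M1 := by
      filter_upwards [haeI] with x hx using hM1 x hx s hsT'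
    have hunb : ∀ᵐ x ∂muI, |un x s| ≤ M2 := by
      filter_upwards [haeI] with x hx using hM2 x hx s hsT'
    have hCus : ∀ᵐ x ∂muI, |u x s| ≤ CuT u T := by
      filter_upwards [hCuae] with x hx using hx s hs
    have hum := hu.2.1 s hs0
    have hunm := hun.2.1 s hs0
    have hDm : Measurable (fun x => u x s - un x s) := hum.sub hunm
    have hD2 : MemLp (fun x => u x s - un x s) 2 muI := by
      apply memL2_of_bound hDm.aestronglyMeasurable (C := M1 + M2)
      filter_upwards [hub, hunb] with x h1 h2
      calc |u x s - un x s| ≤ |u x s| + |un x s| := abs_sub _ _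
        _ ≤ M1 + M2 := add_le_add h1 h2
    have hGm : Measurable (fun x => RHS W u x s - RHS K un x s) :=
      (RHS_measurable hWm hum).sub (RHS_measurable hKm hunm)
    have hG2 : MemLp (fun x => RHS W u x s - RHS K un x s) 2 muI := by
      apply memL2_of_bound hGm.aestronglyMeasurable (C := 2 * M1 + 2 * M2)
      filter_upwards [hub, hunb] with x h1 h2
      have hr1 : |RHS W u x s| ≤ 2 * M1 := RHS_bound hW1' hub h1
      have hr2 : |RHS K un x s| ≤ 2 * M2 := RHS_bound hK1' hunb h2
      calc |RHS W u x s - RHS K un x s| ≤ |RHS W u x s| + |RHS K un x s| := abs_sub _ _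
        _ ≤ 2 * M1 + 2 * M2 := add_le_add hr1 hr2
    have hsplit : ψ' s = 2 * ∫ x, (u x s - un x s) * (RHS W u x s - RHS K un x s) ∂muI := by
      have h1 : ψ' s = ∫ x, 2 * ((u x s - un x s) * (RHS W u x s - RHS K un x s)) ∂muI := by
        show (∫ x, 2 * (u x s - un x s) * (RHS W u x s - RHS K un x s) ∂muI) = _
        congr 1
        funext x
        ring
      rw [h1, MeasureTheory.integral_const_mul]
    have hCS := integral_mul_le_L2 hD2 hG2
    rw [integral_I01] at hCS
    have hGb := G_L2_bound hWm hKm hW1' hK1' hum hunm hub hunb hCus (CuT_nonneg u T)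
    have hL2D : L2norm (fun x => u x s - un x s) = Real.sqrt (ψ s) := rfl
    rw [hL2D] at hCS hGb
    rw [hsplit, abs_mul, abs_two]
    have hsq : 0 ≤ Real.sqrt (ψ s) := Real.sqrt_nonneg _
    nlinarith [hCS, hGb, abs_nonneg (∫ x, (u x s - un x s) * (RHS W u x s - RHS K un x s) ∂muI),
      L2norm_nonneg (fun x => RHS W u x s - RHS K un x s)]
  -- Grönwall with regularization
  have key : ∀ δ : ℝ, 0 < δ → ∀ a ∈ Set.Ioc (0:ℝ) t,
      Real.sqrt (ψ t + δ^2) ≤ (Real.sqrt (ψ a + δ^2) + c) * Real.exp (4 * T) := by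
    intro δ hδ a ha
    set fδ : ℝ → ℝ := fun s => Real.sqrt (ψ s + δ^2) with hfδ
    have hfδpos : ∀ s, 0 < fδ s := fun s => Real.sqrt_pos.mpr (by nlinarith [hψnn s])
    have hIoo : ∀ s, s ∈ Set.Icc a T → s ∈ Set.Ioo (0:ℝ) T' := fun s hs =>
      ⟨lt_of_lt_of_le ha.1 hs.1, by rw [hT'def]; linarith [hs.2]⟩
    have hder : ∀ s ∈ Set.Icc a T, HasDerivAt fδ (ψ' s / (2 * fδ s)) s := by
      intro s hs
      have h1 : HasDerivAt (fun r => ψ r + δ^2) (ψ' s) s :=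
        (hψ'deriv s (hIoo s hs)).add_const (δ^2)
      have hne : ψ s + δ^2 ≠ 0 := by nlinarith [hψnn s]
      have h2 := (Real.hasDerivAt_sqrt hne).comp s h1
      exact h2.congr_deriv (by simp only [hfδ]; ring)
    have hcontOn : ContinuousOn fδ (Set.Icc a T) := fun s hs =>
      ((hder s hs).continuousAt).continuousWithinAt
    have hbound : ∀ s ∈ Set.Ico a T, ‖ψ' s / (2 * fδ s)‖ ≤ 4 * ‖fδ s‖ + 4 * c := by
      intro s hs
      have hsIcc : s ∈ Set.Icc (0:ℝ) T := ⟨le_of_lt (lt_of_lt_of_le ha.1 hs.1), le_of_lt hs.2⟩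
      have hb := hψ'bound s hsIcc
      have hp := hfδpos s
      have hsqle : Real.sqrt (ψ s) ≤ fδ s := Real.sqrt_le_sqrt (by nlinarith)
      have hsqnn : 0 ≤ Real.sqrt (ψ s) := Real.sqrt_nonneg _
      rw [Real.norm_eq_abs, Real.norm_eq_abs, abs_div, abs_of_pos (by linarith : (0:ℝ) < 2 * fδ s),
        abs_of_pos hp, div_le_iff₀ (by linarith : (0:ℝ) < 2 * fδ s)]
      nlinarith
    have hGron := norm_le_gronwallBound_of_norm_deriv_right_le (δ := fδ a) (K := 4) (ε := 4 * c)
      hcontOn (fun s hs => (hder s ⟨hs.1, le_of_lt hs.2⟩).hasDerivWithinAt)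
      (by rw [Real.norm_of_nonneg (Real.sqrt_nonneg _)]) hbound t ⟨ha.2, ht.2⟩
    rw [Real.norm_of_nonneg (Real.sqrt_nonneg _)] at hGron
    rw [gronwallBound_of_K_ne_0 (by norm_num : (4:ℝ) ≠ 0)] at hGron
    have hexple : Real.exp (4 * (t - a)) ≤ Real.exp (4 * T) := by
      apply Real.exp_le_exp.mpr
      have := ht.2
      nlinarith [ha.1]
    have hexppos : 0 < Real.exp (4 * (t - a)) := Real.exp_pos _
    have hfδann : 0 ≤ fδ a := Real.sqrt_nonneg _
    calc Real.sqrt (ψ t + δ^2)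
        ≤ fδ a * Real.exp (4 * (t - a)) + 4 * c / 4 * (Real.exp (4 * (t - a)) - 1) := hGron
      _ ≤ (fδ a + c) * Real.exp (4 * T) := by nlinarith
  -- limit a → 0⁺
  have hψcont : ContinuousWithinAt ψ (Set.Ici 0) 0 := by
    apply psi_contWithinAt_zero hT' hu.2.1 hun.2.1 _ _ hM1 hM2
    · exact fun x hx => (hu.2.2.2 x hx 0 le_rfl).continuousAt
    · exact fun x hx => (hun.2.2.2 x hx 0 le_rfl).continuousAt
  have key2 : ∀ δ : ℝ, 0 < δ →
      Real.sqrt (ψ t + δ^2) ≤ (Real.sqrt (ψ 0 + δ^2) + c) * Real.exp (4 * T) := by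
    intro δ hδ
    have hmem : Set.Ioc (0:ℝ) t ∈ 𝓝[>] (0:ℝ) := Ioc_mem_nhdsGT_of_mem ⟨le_refl 0, htpos⟩
    have htend : Filter.Tendsto (fun a => (Real.sqrt (ψ a + δ^2) + c) * Real.exp (4 * T))
        (𝓝[>] (0:ℝ)) (𝓝 ((Real.sqrt (ψ 0 + δ^2) + c) * Real.exp (4 * T))) := by
      have h1 : ContinuousWithinAt (fun a => (Real.sqrt (ψ a + δ^2) + c) * Real.exp (4 * T))
          (Set.Ici 0) 0 := by
        apply ContinuousWithinAt.mul _ continuousWithinAt_const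
        apply ContinuousWithinAt.add _ continuousWithinAt_const
        exact (Real.continuous_sqrt.continuousAt).comp_continuousWithinAt
          (hψcont.add continuousWithinAt_const)
      exact h1.mono (Set.Ioi_subset_Ici le_rfl)
    refine ge_of_tendsto htend ?_
    filter_upwards [hmem] with a ha using key δ hδ a ha
  -- limit δ → 0⁺
  have key3 : Real.sqrt (ψ t) ≤ (Real.sqrt (ψ 0) + c) * Real.exp (4 * T) := by
    have h1 : ContinuousAt (fun δ : ℝ => (Real.sqrt (ψ 0 + δ^2) + c) * Real.exp (4 * T)) 0 := by
      apply ContinuousAt.mul _ continuousAt_const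
      apply ContinuousAt.add _ continuousAt_const
      exact (Real.continuous_sqrt.continuousAt).comp
        ((continuousAt_const.add ((continuous_pow 2).continuousAt)))
    have htend' : Filter.Tendsto (fun δ : ℝ => (Real.sqrt (ψ 0 + δ^2) + c) * Real.exp (4 * T))
        (𝓝[>] (0:ℝ)) (𝓝 ((Real.sqrt (ψ 0) + c) * Real.exp (4 * T))) := by
      have h2 := h1.tendsto.mono_left (nhdsWithin_le_nhds (s := Set.Ioi (0:ℝ)))
      simpa using h2
    refine ge_of_tendsto htend' ?_
    filter_upwards [self_mem_nhdsWithin] with δ hδ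
    have h1 : Real.sqrt (ψ t) ≤ Real.sqrt (ψ t + δ^2) := Real.sqrt_le_sqrt (by nlinarith [sq_nonneg δ])
    exact le_trans h1 (key2 δ hδ)
  rw [hLHS, ← hψ0]
  exact key3
end
end
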